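/- Let 1 < p < r < 2 and consider the Orlicz sequence space ℓ_M generated by M(t) = t^p + t^r, with norm ‖x‖_M = inf { ρ > 0 : Σᵢ ((|xᵢ|/ρ)^p + (|xᵢ|/ρ)^r) ≤ 1 }. If x, y ∈ ℓ_M satisfy ‖x‖_M = ‖y‖_M = 1, then min(‖x+y‖_M, ‖x−y‖_M) < 2^{1/p} or ‖x+y‖_M ≠ ‖x−y‖_M; that is, it is impossible that ‖x+y‖_M = ‖x−y‖_M = 2^{1/p}. -/

import Mathlib

/-- The Orlicz norm of a real sequence for the Orlicz function `M(t) = t^p + t^r`: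
`‖x‖_M = inf { ρ > 0 : Σᵢ ((|xᵢ|/ρ)^p + (|xᵢ|/ρ)^r) ≤ 1 }`. -/
noncomputable def orliczNorm (p r : ℝ) (x : ℕ → ℝ) : ℝ :=
  sInf {ρ : ℝ | 0 < ρ ∧ Summable (fun i => (|x i| / ρ) ^ p + (|x i| / ρ) ^ r) ∧
    (∑' i, ((|x i| / ρ) ^ p + (|x i| / ρ) ^ r)) ≤ 1}

/-!
Put `ρ = 2^{1/p}`, so that `ρ^p = 2 < ρ^r`. The Clarkson-type inequality
`|a+b|^q + |a-b|^q ≤ 2(|a|^q + |b|^q)` for `q ≤ 2`, applied with `q = p` and `q = r`, gives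
`M(|a+b|/ρ) + M(|a-b|/ρ) ≤ |a|^p + |b|^p + (2/ρ^r)(|a|^r + |b|^r)`, which is strictly below
`M(|a|) + M(|b|)` unless `a = b = 0`. Summing over the coordinates, the two modulars of
`(x ± y)/ρ` add up to strictly less than the modulars of `x` and `y`, which are at most `1` each
because `‖x‖_M = ‖y‖_M = 1`. But if `‖x ± y‖_M = ρ`, the modular of `(x ± y)/ρ` is at least `1`.
-/

open Finset

noncomputable def orliczFun (p r t : ℝ) : ℝ := t ^ p + t ^ r

lemma orliczFun_nonneg {p r t : ℝ} (ht : 0 ≤ t) : 0 ≤ orliczFun p r t := by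
  unfold orliczFun; positivity

lemma orliczFun_div_le {p r a b u : ℝ} (hpr : p ≤ r) (ha : 0 < a) (hab : a ≤ b) (hu : 0 ≤ u) :
    orliczFun p r (u / a) ≤ (b / a) ^ r * orliczFun p r (u / b) := by
  have hb : 0 < b := ha.trans_le hab
  have hub : 0 ≤ u / b := by positivity
  have hc : 0 ≤ b / a := by positivity
  have hcpr : (b / a) ^ p ≤ (b / a) ^ r :=
    Real.rpow_le_rpow_of_exponent_le ((one_le_div ha).2 hab) hpr
  have hsplit : u / a = b / a * (u / b) := by field_simp
  unfold orliczFun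
  rw [hsplit, Real.mul_rpow hc hub, Real.mul_rpow hc hub, mul_add]
  linarith [mul_le_mul_of_nonneg_right hcpr (Real.rpow_nonneg hub p)]

lemma abs_add_rpow_add_abs_sub_rpow_le {q : ℝ} (hq0 : 0 ≤ q) (hq2 : q ≤ 2) (a b : ℝ) :
    |a + b| ^ q + |a - b| ^ q ≤ 2 * (|a| ^ q + |b| ^ q) := by
  have hpow : ∀ c : ℝ, |c| ^ q = (c ^ 2) ^ (q / 2) := fun c => by
    rw [← sq_abs, ← Real.rpow_natCast, ← Real.rpow_mul (abs_nonneg c)]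
    ring_nf
  -- concavity of `t ↦ t^(q/2)` at the midpoint `a² + b²` of `(a+b)²` and `(a-b)²`
  have hmid := (Real.concaveOn_rpow (p := q / 2) (by positivity) (by linarith)).2
    (sq_nonneg (a + b)) (sq_nonneg (a - b)) (by norm_num : (0 : ℝ) ≤ 1 / 2)
    (by norm_num : (0 : ℝ) ≤ 1 / 2) (by norm_num)
  have hsub := Real.rpow_add_le_add_rpow (sq_nonneg a) (sq_nonneg b) (by positivity)
    (by linarith : q / 2 ≤ 1)
  simp only [smul_eq_mul] at hmid
  rw [show 1 / 2 * (a + b) ^ 2 + 1 / 2 * (a - b) ^ 2 = a ^ 2 + b ^ 2 by ring] at hmid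
  rw [hpow, hpow, hpow, hpow]
  linarith

lemma orliczFun_add_orliczFun_sub_le {p r ρ : ℝ} (hp0 : 0 ≤ p) (hp2 : p ≤ 2) (hr0 : 0 ≤ r)
    (hr2 : r ≤ 2) (hρ : 0 < ρ) (a b : ℝ) :
    orliczFun p r (|a + b| / ρ) + orliczFun p r (|a - b| / ρ) ≤
      2 / ρ ^ p * (|a| ^ p + |b| ^ p) + 2 / ρ ^ r * (|a| ^ r + |b| ^ r) := by
  have hq : ∀ q : ℝ, 0 ≤ q → q ≤ 2 →
      (|a + b| / ρ) ^ q + (|a - b| / ρ) ^ q ≤ 2 / ρ ^ q * (|a| ^ q + |b| ^ q) := by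
    intro q hq0 hq2
    rw [Real.div_rpow (abs_nonneg _) hρ.le, Real.div_rpow (abs_nonneg _) hρ.le, ← add_div,
      div_mul_eq_mul_div]
    gcongr
    exact abs_add_rpow_add_abs_sub_rpow_le hq0 hq2 a b
  unfold orliczFun
  linarith [hq p hp0 hp2, hq r hr0 hr2]

section orliczNorm

variable {p r : ℝ} {z : ℕ → ℝ}

lemma orliczNorm_le {ρ : ℝ} (hρ : 0 < ρ) (hs : Summable fun i => orliczFun p r (|z i| / ρ))
    (h : ∑' i, orliczFun p r (|z i| / ρ) ≤ 1) : orliczNorm p r z ≤ ρ :=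
  csInf_le ⟨0, fun _ hρ' => hρ'.1.le⟩ ⟨hρ, hs, h⟩

lemma le_orliczNorm {c : ℝ} (hz : orliczNorm p r z ≠ 0)
    (h : ∀ ρ, 0 < ρ → Summable (fun i => orliczFun p r (|z i| / ρ)) →
      ∑' i, orliczFun p r (|z i| / ρ) ≤ 1 → c ≤ ρ) :
    c ≤ orliczNorm p r z :=
  le_csInf (Set.nonempty_iff_ne_empty.2 fun he => hz (by rw [orliczNorm, he, Real.sInf_empty]))
    fun ρ ⟨hρ, hs, hle⟩ => h ρ hρ hs hle

lemma orliczNorm_zero (hp : 0 < p) (hr : 0 < r) : orliczNorm p r 0 = 0 := by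
  refine le_antisymm (le_of_forall_gt_imp_ge_of_dense fun ρ hρ => orliczNorm_le hρ ?_ ?_)
    (Real.sInf_nonneg fun ρ hρ => hρ.1.le) <;>
  simp [orliczFun, hp.ne', hr.ne']

lemma summable_orliczFun_and_tsum_le_one (hpr : p ≤ r) (hr : 0 < r) {b : ℝ} (hb : 0 < b)
    (hz : orliczNorm p r z = b) :
    Summable (fun i => orliczFun p r (|z i| / b)) ∧ ∑' i, orliczFun p r (|z i| / b) ≤ 1 := by
  have hnonneg : ∀ ρ, 0 < ρ → ∀ i, 0 ≤ orliczFun p r (|z i| / ρ) :=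
    fun ρ hρ i => orliczFun_nonneg (by positivity)
  -- every admissible radius `ρ` bounds a partial sum `F` by `(ρ/b)^r`, and `b` is their infimum
  have hpartial : ∀ u : Finset ℕ, ∑ i ∈ u, orliczFun p r (|z i| / b) ≤ 1 := by
    intro u
    set F := ∑ i ∈ u, orliczFun p r (|z i| / b)
    have hF : 0 ≤ F := sum_nonneg fun i _ => hnonneg b hb i
    have hbound : b * F ^ r⁻¹ ≤ orliczNorm p r z :=
      le_orliczNorm (hz ▸ hb.ne') fun ρ hρ hs hle => by
        have hbρ : b ≤ ρ := hz ▸ orliczNorm_le hρ hs hle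
        have hFρ : F ≤ (ρ / b) ^ r := calc
          F ≤ ∑ i ∈ u, (ρ / b) ^ r * orliczFun p r (|z i| / ρ) :=
            sum_le_sum fun i _ => orliczFun_div_le hpr hb hbρ (abs_nonneg _)
          _ = (ρ / b) ^ r * ∑ i ∈ u, orliczFun p r (|z i| / ρ) := (mul_sum ..).symm
          _ ≤ (ρ / b) ^ r * 1 := by
            gcongr
            exact (hs.sum_le_tsum u fun i _ => hnonneg ρ hρ i).trans hle
          _ = (ρ / b) ^ r := mul_one _
        rwa [← le_div_iff₀' hb, Real.rpow_inv_le_iff_of_pos hF (by positivity) hr]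
    have hF1 : F ^ r⁻¹ ≤ 1 :=
      le_of_mul_le_mul_left (hbound.trans_eq (hz.trans (mul_one b).symm)) hb
    rwa [Real.rpow_inv_le_iff_of_pos hF zero_le_one hr, Real.one_rpow] at hF1
  exact ⟨summable_of_sum_le (hnonneg b hb) hpartial,
    Real.tsum_le_of_sum_le (hnonneg b hb) hpartial⟩

lemma one_le_tsum_orliczFun (hpr : p ≤ r) (hr : 0 < r) {b : ℝ} (hb : 0 < b)
    (hz : orliczNorm p r z = b) (hs : Summable fun i => orliczFun p r (|z i| / b)) :
    1 ≤ ∑' i, orliczFun p r (|z i| / b) := by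
  by_contra! hlt
  set T := ∑' i, orliczFun p r (|z i| / b)
  -- shrinking the radius by `t = m^{1/r} < 1` multiplies the modular by at most `t^{-r} = m⁻¹`
  set m := max T (1 / 2)
  have hm0 : 0 < m := lt_max_of_lt_right one_half_pos
  have hm1 : m < 1 := max_lt hlt one_half_lt_one
  set t := m ^ r⁻¹
  have ht0 : 0 < t := by positivity
  have htb : t * b ≤ b :=
    mul_le_of_le_one_left hb.le (Real.rpow_le_one hm0.le hm1.le (by positivity))
  have hfactor : (b / (t * b)) ^ r = m⁻¹ := by
    rw [div_mul_cancel_right₀ hb.ne', Real.inv_rpow ht0.le, ← Real.rpow_mul hm0.le,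
      inv_mul_cancel₀ hr.ne', Real.rpow_one]
  have hle : ∀ i, orliczFun p r (|z i| / (t * b)) ≤ m⁻¹ * orliczFun p r (|z i| / b) := fun i =>
    hfactor ▸ orliczFun_div_le hpr (by positivity) htb (abs_nonneg _)
  have hs' : Summable fun i => orliczFun p r (|z i| / (t * b)) :=
    (hs.mul_left _).of_nonneg_of_le (fun i => orliczFun_nonneg (by positivity)) hle
  have htsum : ∑' i, orliczFun p r (|z i| / (t * b)) ≤ 1 := calc
    _ ≤ ∑' i, m⁻¹ * orliczFun p r (|z i| / b) := hs'.tsum_le_tsum hle (hs.mul_left _)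
    _ = m⁻¹ * T := tsum_mul_left
    _ ≤ 1 := by rw [inv_mul_le_one₀ hm0]; exact le_max_left _ _
  have := hz ▸ orliczNorm_le (by positivity) hs' htsum
  nlinarith [Real.rpow_lt_one hm0.le hm1 (inv_pos.2 hr)]

end orliczNorm

lemma tsum_orliczFun_add_sub_lt {p r ρ : ℝ} (hp0 : 0 ≤ p) (hp2 : p ≤ 2)
    (hr0 : 0 < r) (hr2 : r ≤ 2) (hρ : 0 < ρ) (hρp : ρ ^ p = 2) (hρr : 2 < ρ ^ r)
    {x y : ℕ → ℝ} (hx0 : x ≠ 0) (hxs : Summable fun i => orliczFun p r |x i|)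
    (hys : Summable fun i => orliczFun p r |y i|) :
    Summable (fun i => orliczFun p r (|(x + y) i| / ρ)) ∧
      Summable (fun i => orliczFun p r (|(x - y) i| / ρ)) ∧
      ∑' i, orliczFun p r (|(x + y) i| / ρ) + ∑' i, orliczFun p r (|(x - y) i| / ρ) <
        ∑' i, orliczFun p r |x i| + ∑' i, orliczFun p r |y i| := by
  set g : ℕ → ℝ := fun i => (1 - 2 / ρ ^ r) * (|x i| ^ r + |y i| ^ r)
  have hcoef : 0 < 1 - 2 / ρ ^ r := by rw [sub_pos, div_lt_one (by positivity)]; exact hρr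
  have hg : ∀ i, 0 ≤ g i := fun i => by positivity
  have hplus : ∀ i, 0 ≤ orliczFun p r (|(x + y) i| / ρ) :=
    fun i => orliczFun_nonneg (by positivity)
  have hminus : ∀ i, 0 ≤ orliczFun p r (|(x - y) i| / ρ) :=
    fun i => orliczFun_nonneg (by positivity)
  have key : ∀ i, orliczFun p r (|(x + y) i| / ρ) + orliczFun p r (|(x - y) i| / ρ) + g i ≤
      orliczFun p r |x i| + orliczFun p r |y i| := fun i => by
    have := orliczFun_add_orliczFun_sub_le hp0 hp2 hr0.le hr2 hρ (x i) (y i)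
    rw [hρp, div_self two_ne_zero, one_mul] at this
    simp only [Pi.add_apply, Pi.sub_apply, orliczFun, g] at this ⊢
    linarith
  have hsum := hxs.add hys
  have hs_add := hsum.of_nonneg_of_le hplus fun i => by linarith [key i, hminus i, hg i]
  have hs_sub := hsum.of_nonneg_of_le hminus fun i => by linarith [key i, hplus i, hg i]
  have hsg := hsum.of_nonneg_of_le hg fun i => by linarith [key i, hplus i, hminus i]
  obtain ⟨i, hi⟩ := Function.ne_iff.1 hx0
  have hg_pos : 0 < ∑' i, g i := hsg.tsum_pos hg i <| mul_pos hcoef <|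
    add_pos_of_pos_of_nonneg (Real.rpow_pos_of_pos (abs_pos.2 hi) r) (by positivity)
  have hle := ((hs_add.add hs_sub).add hsg).tsum_le_tsum key hsum
  rw [hs_add.add hs_sub |>.tsum_add hsg, hs_add.tsum_add hs_sub, hxs.tsum_add hys] at hle
  exact ⟨hs_add, hs_sub, by linarith⟩

theorem orlicz_sum_diff_not_both_norm_general (p r : ℝ) (hp : 1 < p) (hpr : p < r) (hr : r < 2)
    (x y : ℕ → ℝ)
    (hx1 : orliczNorm p r x = 1) (hy1 : orliczNorm p r y = 1) :
    ¬ (orliczNorm p r (x + y) = (2 : ℝ) ^ (1 / p) ∧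
       orliczNorm p r (x - y) = (2 : ℝ) ^ (1 / p)) := by
  rintro ⟨hplus, hminus⟩
  have hp0 : 0 < p := by linarith
  have hr0 : 0 < r := by linarith
  set ρ : ℝ := (2 : ℝ) ^ (1 / p)
  have hρ : 0 < ρ := by positivity
  have hρp : ρ ^ p = 2 := by
    rw [← Real.rpow_mul zero_le_two, one_div_mul_cancel hp0.ne', Real.rpow_one]
  have hρr : 2 < ρ ^ r := by
    rw [← Real.rpow_mul zero_le_two, one_div_mul_eq_div]
    exact Real.self_lt_rpow_of_one_lt one_lt_two ((one_lt_div hp0).2 hpr)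
  have hx0 : x ≠ 0 := by rintro rfl; simp [orliczNorm_zero hp0 hr0] at hx1
  obtain ⟨hxs, hx⟩ := summable_orliczFun_and_tsum_le_one hpr.le hr0 one_pos hx1
  obtain ⟨hys, hy⟩ := summable_orliczFun_and_tsum_le_one hpr.le hr0 one_pos hy1
  simp only [div_one] at hxs hx hys hy
  obtain ⟨hs_add, hs_sub, hlt⟩ := tsum_orliczFun_add_sub_lt hp0.le (by linarith)
    hr0 hr.le hρ hρp hρr hx0 hxs hys
  have h_add := one_le_tsum_orliczFun hpr.le hr0 hρ hplus hs_add
  have h_sub := one_le_tsum_orliczFun hpr.le hr0 hρ hminus hs_sub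
  linarith

/-- Let `1 < p < r < 2` and let `ℓ_M` be the Orlicz sequence space generated by
`M(t) = t^p + t^r`. If `x, y ∈ ℓ_M` with `‖x‖_M = ‖y‖_M = 1`, then it is impossible that
`‖x+y‖_M = ‖x-y‖_M = 2^{1/p}`. -/
theorem orlicz_sum_diff_not_both_norm (p r : ℝ) (hp : 1 < p) (hpr : p < r) (hr : r < 2)
    (x y : ℕ → ℝ)
    (hxM : ∃ ρ : ℝ, 0 < ρ ∧ Summable (fun i => (|x i| / ρ) ^ p + (|x i| / ρ) ^ r))
    (hyM : ∃ ρ : ℝ, 0 < ρ ∧ Summable (fun i => (|y i| / ρ) ^ p + (|y i| / ρ) ^ r))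
    (hx1 : orliczNorm p r x = 1) (hy1 : orliczNorm p r y = 1) :
    ¬ (orliczNorm p r (x + y) = (2 : ℝ) ^ (1 / p) ∧
       orliczNorm p r (x - y) = (2 : ℝ) ^ (1 / p)) :=
  orlicz_sum_diff_not_both_norm_general p r hp hpr hr x y hx1 hy1
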